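/- arXiv:2507.21405 — 2 statements merged into one kernel-verified Lean document; each statement's English description precedes it below -/
import Mathlib

section
/- Let f : (ℂⁿ,0) → (ℂⁿ⁺¹,0) be a finite holomorphic map germ. Then mult f = gd(f) if and only if, after a linear change of coordinates in the target, f takes the form f = (f̄, h) with f̄ : (ℂⁿ,0) → (ℂⁿ,0) finite and h belonging to the ideal of O_n generated by the coordinate functions of f̄. -/
open Filter Topology Set

noncomputable section

/-- `ℂⁿ` with its Euclidean (Hermitian) norm. -/
abbrev Cn (n : ℕ) : Type := EuclideanSpace ℂ (Fin n)

instance germAlgebra {α : Type*} (l : Filter α) : Algebra ℂ (Filter.Germ l ℂ) :=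
  Algebra.ofModule
    (fun r x y => by
      induction x using Filter.Germ.inductionOn with | _ f =>
      induction y using Filter.Germ.inductionOn with | _ g =>
      rw [← Filter.Germ.coe_smul, ← Filter.Germ.coe_mul, ← Filter.Germ.coe_mul,
        ← Filter.Germ.coe_smul, smul_mul_assoc])
    (fun r x y => by
      induction x using Filter.Germ.inductionOn with | _ f =>
      induction y using Filter.Germ.inductionOn with | _ g =>
      rw [← Filter.Germ.coe_smul, ← Filter.Germ.coe_mul, ← Filter.Germ.coe_mul,
        ← Filter.Germ.coe_smul, mul_smul_comm])

/-- The local ℂ-algebra `𝒪_n` of germs at `0` of holomorphic functions on `ℂⁿ`. -/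
def Ogerm (n : ℕ) : Subalgebra ℂ (Filter.Germ (𝓝 (0 : Cn n)) ℂ) where
  carrier := {G | ∃ g : Cn n → ℂ, AnalyticAt ℂ g 0 ∧ (g : Filter.Germ (𝓝 (0 : Cn n)) ℂ) = G}
  mul_mem' := by rintro _ _ ⟨g, hg, rfl⟩ ⟨h, hh, rfl⟩; exact ⟨g * h, hg.mul hh, rfl⟩
  add_mem' := by rintro _ _ ⟨g, hg, rfl⟩ ⟨h, hh, rfl⟩; exact ⟨g + h, hg.add hh, rfl⟩
  algebraMap_mem' := fun c => ⟨fun _ => c, analyticAt_const, by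
    rw [Algebra.algebraMap_eq_smul_one, ← Filter.Germ.coe_one, ← Filter.Germ.coe_smul]
    congr 1
    funext x
    simp⟩

/-- The ideal `⟨f⟩` of `𝒪_n` generated by the coordinate functions of `f`. -/
def coordIdeal {n p : ℕ} (f : Cn n → Cn p) : Ideal (Ogerm n) :=
  Ideal.span {G : Ogerm n | ∃ i : Fin p,
    (G : Filter.Germ (𝓝 (0 : Cn n)) ℂ) =
      ((fun x => f x i : Cn n → ℂ) : Filter.Germ (𝓝 (0 : Cn n)) ℂ)}

/-- The multiplicity `mult f = dim_ℂ 𝒪ₙ/⟨f⟩` of a map germ. -/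
def multGerm {n p : ℕ} (f : Cn n → Cn p) : Cardinal :=
  Module.rank ℂ (Ogerm n ⧸ coordIdeal f)

/-- `f` is a finite map germ: `dim_ℂ 𝒪ₙ/f^*(𝔪_p)𝒪ₙ < ∞`. -/
def FiniteGerm {n p : ℕ} (f : Cn n → Cn p) : Prop :=
  multGerm f < Cardinal.aleph0

/-- The generic degree `gd(f)`: the minimum of `dim_ℂ 𝒪ₙ/⟨π ∘ f⟩` over all surjective
linear projections `π : ℂⁿ⁺¹ → ℂⁿ`. -/
def gdGerm {n : ℕ} (f : Cn n → Cn (n+1)) : Cardinal :=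
  sInf {c : Cardinal | ∃ π : Cn (n+1) →ₗ[ℂ] Cn n, Function.Surjective π ∧
    c = multGerm (fun x => π (f x))}

/-! Every coordinate of `π ∘ f` is a linear combination of those of `f`, so `⟨π ∘ f⟩ ⊆ ⟨f⟩` and
`mult f ≤ gd f`. For a projection `π` realising `gd f`, equality of these finite multiplicities
forces `⟨π ∘ f⟩ = ⟨f⟩`; completing the coordinate functionals of `π` by one more functional gives
the coordinate change `T`, and the last coordinate of `T ∘ f` lies in `⟨f⟩ = ⟨f̄⟩`. Conversely, if
`h ∈ ⟨f̄⟩` then `⟨f⟩ = ⟨T ∘ f⟩ = ⟨f̄⟩`, whence `gd f ≤ mult f̄ = mult f`. -/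

open Module Function

theorem Ideal.rank_quotient_le_of_le {K R : Type*} [Field K] [CommRing R] [Algebra K R]
    {I J : Ideal R} (h : I ≤ J) : Module.rank K (R ⧸ J) ≤ Module.rank K (R ⧸ I) :=
  LinearMap.rank_le_of_surjective (Ideal.Quotient.factorₐ K h).toLinearMap
    (Ideal.Quotient.factor_surjective h)

theorem Ideal.eq_of_le_of_rank_quotient_eq {K R : Type*} [Field K] [CommRing R] [Algebra K R]
    {I J : Ideal R} (h : I ≤ J) (hrank : Module.rank K (R ⧸ I) = Module.rank K (R ⧸ J))
    (hfin : Module.rank K (R ⧸ J) < Cardinal.aleph0) : I = J := by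
  have : FiniteDimensional K (R ⧸ J) := Module.rank_lt_aleph0_iff.mp hfin
  have : FiniteDimensional K (R ⧸ I) := Module.rank_lt_aleph0_iff.mp (hrank ▸ hfin)
  have hinj : Injective (Ideal.Quotient.factorₐ K h).toLinearMap :=
    (LinearMap.injective_iff_surjective_of_finrank_eq_finrank
      (congrArg Cardinal.toNat hrank)).mpr (Ideal.Quotient.factor_surjective h)
  refine le_antisymm h fun x hx => ?_
  rw [← Ideal.Quotient.eq_zero_iff_mem] at hx ⊢
  exact hinj (by simpa using hx)

theorem LinearMap.exists_injective_prod_of_finrank_ker_eq_one {K V W : Type*} [Field K]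
    [AddCommGroup V] [Module K V] [AddCommGroup W] [Module K W]
    (π : V →ₗ[K] W) (hker : finrank K (LinearMap.ker π) = 1) :
    ∃ ℓ : V →ₗ[K] K, Injective (π.prod ℓ) := by
  obtain ⟨u, hu0, hu⟩ := finrank_eq_one_iff'.mp hker
  obtain ⟨ℓ, hℓ⟩ := Module.Projective.exists_dual_ne_zero K (fun h => hu0 (Subtype.ext h) :
    (u : V) ≠ 0)
  refine ⟨ℓ, (injective_iff_map_eq_zero _).mpr fun v hv => ?_⟩
  rw [LinearMap.prod_apply, Function.prod_apply, Prod.mk_eq_zero] at hv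
  obtain ⟨c, hc⟩ := hu ⟨v, hv.1⟩
  have hcv : c • (u : V) = v := congrArg Subtype.val hc
  have : c * ℓ u = 0 := by rw [← smul_eq_mul, ← map_smul, hcv, hv.2]
  rw [← hcv, (mul_eq_zero.mp this).resolve_right hℓ, zero_smul]

theorem AnalyticAt.linearMap_comp {𝕜 E F G : Type*} [NontriviallyNormedField 𝕜] [CompleteSpace 𝕜]
    [NormedAddCommGroup E] [NormedSpace 𝕜 E] [NormedAddCommGroup F] [NormedSpace 𝕜 F]
    [FiniteDimensional 𝕜 F] [NormedAddCommGroup G] [NormedSpace 𝕜 G]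
    {f : E → F} {x : E} (hf : AnalyticAt 𝕜 f x) (T : F →ₗ[𝕜] G) :
    AnalyticAt 𝕜 (fun y => T (f y)) x :=
  (T.toContinuousLinearMap.analyticAt _).comp hf

section

variable {n p q : ℕ}

def Ogerm.mk (g : Cn n → ℂ) (hg : AnalyticAt ℂ g 0) : Ogerm n :=
  ⟨g, g, hg, rfl⟩

theorem AnalyticAt.euclidean_apply {f : Cn n → Cn p} (hfa : AnalyticAt ℂ f 0) (i : Fin p) :
    AnalyticAt ℂ (fun x => f x i) 0 :=
  ((EuclideanSpace.proj i : Cn p →L[ℂ] ℂ).analyticAt _).comp hfa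

theorem Ogerm.mk_coord_mem_coordIdeal {f : Cn n → Cn p} (hfa : AnalyticAt ℂ f 0) (i : Fin p) :
    Ogerm.mk (fun x => f x i) (hfa.euclidean_apply i) ∈ coordIdeal f :=
  Ideal.subset_span ⟨i, rfl⟩

theorem EuclideanSpace.linearMap_apply_eq_sum (π : Cn p →ₗ[ℂ] Cn q) (v : Cn p) (i : Fin q) :
    π v i = ∑ j, π (EuclideanSpace.single j 1) i * v j := by
  conv_lhs => rw [← (EuclideanSpace.basisFun (Fin p) ℂ).sum_repr v]
  simp [mul_comm]

theorem coordIdeal_comp_linearMap_le {f : Cn n → Cn p} (hfa : AnalyticAt ℂ f 0)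
    (π : Cn p →ₗ[ℂ] Cn q) : coordIdeal (fun x => π (f x)) ≤ coordIdeal f := by
  refine Ideal.span_le.mpr ?_
  rintro G ⟨i, hG⟩
  have hG_sum : G = ∑ j, π (EuclideanSpace.single j 1) i •
      Ogerm.mk (fun x => f x j) (hfa.euclidean_apply j) := by
    apply Subtype.ext
    have hπf : (fun x => π (f x) i) =
        ∑ j, π (EuclideanSpace.single j 1) i • fun x => f x j := by
      ext x
      simp [EuclideanSpace.linearMap_apply_eq_sum π (f x) i]
    rw [hG, hπf, AddSubmonoidClass.coe_finsetSum]
    simp only [SetLike.val_smul, Ogerm.mk, ← Filter.Germ.coe_smul]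
    exact map_sum (Filter.Germ.coeRingHom _) _ _
  rw [hG_sum]
  exact Ideal.sum_mem _ fun j _ =>
    Submodule.smul_of_tower_mem _ _ (Ogerm.mk_coord_mem_coordIdeal hfa j)

theorem exists_linearEquiv_castSucc_eq {π : Cn (n+1) →ₗ[ℂ] Cn n} (hπ : Surjective π) :
    ∃ T : Cn (n+1) ≃ₗ[ℂ] Cn (n+1), ∀ v (i : Fin n), T v i.castSucc = π v i := by
  have hker : finrank ℂ (LinearMap.ker π) = 1 := by
    have := π.finrank_range_add_finrank_ker
    rw [LinearMap.range_eq_top.2 hπ, finrank_top, finrank_euclideanSpace_fin,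
      finrank_euclideanSpace_fin] at this
    omega
  obtain ⟨ℓ, hℓ⟩ := π.exists_injective_prod_of_finrank_ker_eq_one hker
  let T : Cn (n+1) →ₗ[ℂ] Cn (n+1) :=
    (WithLp.linearEquiv 2 ℂ (Fin (n+1) → ℂ)).symm.toLinearMap ∘ₗ
      LinearMap.pi (Fin.lastCases ℓ fun i =>
        (EuclideanSpace.proj i : Cn n →L[ℂ] ℂ).toLinearMap ∘ₗ π)
  have hT_castSucc (v : Cn (n+1)) (i : Fin n) : T v i.castSucc = π v i := by simp [T]
  have hT_last (v : Cn (n+1)) : T v (Fin.last n) = ℓ v := by simp [T]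
  have hT_inj : Injective T := fun v w h => hℓ <| Prod.ext
    (PiLp.ext fun i => by
      have := congr($h i.castSucc)
      rwa [hT_castSucc, hT_castSucc] at this)
    (by
      have := congr($h (Fin.last n))
      rwa [hT_last, hT_last] at this)
  exact ⟨LinearEquiv.ofInjectiveEndo T hT_inj, hT_castSucc⟩

def initₗ (n : ℕ) : Cn (n+1) →ₗ[ℂ] Cn n where
  toFun v := WithLp.toLp 2 (Fin.init v)
  map_add' _ _ := rfl
  map_smul' _ _ := rfl

theorem initₗ_surjective (n : ℕ) : Surjective (initₗ n) := fun w =>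
  ⟨WithLp.toLp 2 (Fin.snoc w 0), congrArg (WithLp.toLp 2) (Fin.init_snoc _ _)⟩

theorem gdGerm_le_multGerm_comp (f : Cn n → Cn (n+1)) {π : Cn (n+1) →ₗ[ℂ] Cn n}
    (hπ : Surjective π) : gdGerm f ≤ multGerm (fun x => π (f x)) :=
  csInf_le' ⟨π, hπ, rfl⟩

theorem exists_multGerm_comp_eq_gdGerm (f : Cn n → Cn (n+1)) :
    ∃ π : Cn (n+1) →ₗ[ℂ] Cn n, Surjective π ∧ multGerm (fun x => π (f x)) = gdGerm f := by
  obtain ⟨π, hπ, h⟩ := csInf_mem (⟨_, initₗ n, initₗ_surjective n, rfl⟩ :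
    {c | ∃ π : Cn (n+1) →ₗ[ℂ] Cn n, Surjective π ∧ c = multGerm (fun x => π (f x))}.Nonempty)
  exact ⟨π, hπ, h.symm⟩

theorem multGerm_le_gdGerm {f : Cn n → Cn (n+1)} (hfa : AnalyticAt ℂ f 0) :
    multGerm f ≤ gdGerm f :=
  le_csInf ⟨_, initₗ n, initₗ_surjective n, rfl⟩ <| by
    rintro _ ⟨π, -, rfl⟩
    exact Ideal.rank_quotient_le_of_le (coordIdeal_comp_linearMap_le hfa π)

theorem coordIdeal_le_coordIdeal_init {g : Cn n → Cn (p+1)} {H : Ogerm n}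
    (hH : (H : Filter.Germ (𝓝 (0 : Cn n)) ℂ) =
      ((fun x => g x (Fin.last p) : Cn n → ℂ) : Filter.Germ (𝓝 (0 : Cn n)) ℂ))
    (hmem : H ∈ coordIdeal (fun x => initₗ p (g x))) :
    coordIdeal g ≤ coordIdeal (fun x => initₗ p (g x)) := by
  refine Ideal.span_le.mpr ?_
  rintro G ⟨j, hG⟩
  induction j using Fin.lastCases with
  | last => rwa [Subtype.ext (hG.trans hH.symm)]
  | cast i => exact Ideal.subset_span ⟨i, hG⟩

end

theorem mult_eq_gd_iff_last_coordinate_in_ideal_general (n : ℕ) (f : Cn n → Cn (n+1))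
    (hfa : AnalyticAt ℂ f 0) (hfin : FiniteGerm f) :
    multGerm f = gdGerm f ↔
      ∃ T : Cn (n+1) ≃ₗ[ℂ] Cn (n+1),
        FiniteGerm (fun x : Cn n =>
          (show Cn n from WithLp.toLp 2 (fun i : Fin n => T (f x) i.castSucc))) ∧
        ∃ H : Ogerm n,
          (H : Filter.Germ (𝓝 (0 : Cn n)) ℂ) =
            ((fun x => T (f x) (Fin.last n) : Cn n → ℂ) :
              Filter.Germ (𝓝 (0 : Cn n)) ℂ) ∧
          H ∈ coordIdeal (fun x : Cn n =>
            (show Cn n from WithLp.toLp 2 (fun i : Fin n => T (f x) i.castSucc))) := by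
  constructor
  · intro hgd
    obtain ⟨π, hπ, hπgd⟩ := exists_multGerm_comp_eq_gdGerm f
    have hideal : coordIdeal (fun x => π (f x)) = coordIdeal f :=
      Ideal.eq_of_le_of_rank_quotient_eq (coordIdeal_comp_linearMap_le hfa π)
        (hπgd.trans hgd.symm) hfin
    obtain ⟨T, hT⟩ := exists_linearEquiv_castSucc_eq hπ
    have hTfa := hfa.linearMap_comp T.toLinearMap
    have hfbar : (fun x : Cn n => (show Cn n from WithLp.toLp 2 fun i : Fin n =>
        T (f x) i.castSucc)) = fun x => π (f x) := funext fun x => PiLp.ext (hT (f x))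
    refine ⟨T, ?_, Ogerm.mk _ (hTfa.euclidean_apply (Fin.last n)), rfl, ?_⟩
    · rw [hfbar, FiniteGerm, multGerm, hideal]
      exact hfin
    · rw [hfbar, hideal]
      exact coordIdeal_comp_linearMap_le hfa T.toLinearMap
        (Ogerm.mk_coord_mem_coordIdeal hTfa _)
  · rintro ⟨T, -, H, hH, hHmem⟩
    have hTfa := hfa.linearMap_comp T.toLinearMap
    have hle : coordIdeal f ≤ coordIdeal (fun x => initₗ n (T (f x))) := calc
      coordIdeal f = coordIdeal (fun x => T.symm (T (f x))) := by simp
      _ ≤ coordIdeal (fun x => T (f x)) := coordIdeal_comp_linearMap_le hTfa T.symm.toLinearMap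
      _ ≤ coordIdeal (fun x => initₗ n (T (f x))) := coordIdeal_le_coordIdeal_init hH hHmem
    refine le_antisymm (multGerm_le_gdGerm hfa) ?_
    calc gdGerm f ≤ multGerm (fun x => (initₗ n ∘ₗ T.toLinearMap) (f x)) :=
          gdGerm_le_multGerm_comp f ((initₗ_surjective n).comp T.surjective)
      _ ≤ multGerm f := Ideal.rank_quotient_le_of_le hle

/-- **Remark (statement 5).** For a finite map germ `f : (ℂⁿ,0) → (ℂⁿ⁺¹,0)`,
`mult f = gd f` iff after a linear change of coordinates in the target `f = (f̄, h)`
with `f̄ : (ℂⁿ,0) → (ℂⁿ,0)` finite and `h ∈ ⟨f̄⟩`. -/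
theorem mult_eq_gd_iff_last_coordinate_in_ideal (n : ℕ) (f : Cn n → Cn (n+1))
    (hf0 : f 0 = 0) (hfa : AnalyticAt ℂ f 0) (hfin : FiniteGerm f) :
    multGerm f = gdGerm f ↔
      ∃ T : Cn (n+1) ≃ₗ[ℂ] Cn (n+1),
        FiniteGerm (fun x : Cn n =>
          (show Cn n from WithLp.toLp 2 (fun i : Fin n => T (f x) i.castSucc))) ∧
        ∃ H : Ogerm n,
          (H : Filter.Germ (𝓝 (0 : Cn n)) ℂ) =
            ((fun x => T (f x) (Fin.last n) : Cn n → ℂ) :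
              Filter.Germ (𝓝 (0 : Cn n)) ℂ) ∧
          H ∈ coordIdeal (fun x : Cn n =>
            (show Cn n from WithLp.toLp 2 (fun i : Fin n => T (f x) i.castSucc))) :=
  mult_eq_gd_iff_last_coordinate_in_ideal_general n f hfa hfin
end
end

section
/- Let f : ℂ² → ℂ³ be f(x,y) = (x, y², xy). Then the image of f equals the set {(a,b,c) ∈ ℂ³ : c² = a²b}, and the tangent cone of this set at the origin is the plane {(a,b,c) ∈ ℂ³ : c = 0}. -/
open Filter Topology Set

noncomputable section

/-- The tangent cone of `X` at `x`: all limits `v` of `tₖ • (xₖ - x)` with `xₖ ∈ X`,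
`xₖ → x` and `tₖ ∈ ℂ`. -/
def tangentConeSet {E : Type*} [NormedAddCommGroup E] [NormedSpace ℂ E]
    (X : Set E) (x : E) : Set E :=
  {v | ∃ (xs : ℕ → E) (ts : ℕ → ℂ), (∀ k, xs k ∈ X) ∧
    Filter.Tendsto xs Filter.atTop (𝓝 x) ∧
    Filter.Tendsto (fun k => ts k • (xs k - x)) Filter.atTop (𝓝 v)}

/-! The relation `c² = a²b` is what remains of `(x, y², xy)` after eliminating `x, y`; conversely a
point of the surface with `a ≠ 0` is `f(a, c/a)`, and one with `a = 0` (hence `c = 0`) is `f(0, √b)`.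
On the surface `(tc)² = (ta)²·b` with `b → 0`, so every tangent vector has `c = 0`; conversely
`(a, b, 0)` is the limit as `z → 0` of `z⁻² • f(z²a, z√b) = (a, b, z a √b)`. -/

theorem PiLp.toLp_vec3_eq_iff {p : ENNReal} {α : Type*} {a b c : α}
    {v : PiLp p fun _ : Fin 3 => α} :
    WithLp.toLp p ![a, b, c] = v ↔ a = v 0 ∧ b = v 1 ∧ c = v 2 := by
  refine ⟨by rintro rfl; simp, fun ⟨h0, h1, h2⟩ => ?_⟩
  ext i
  fin_cases i <;> assumption

def crossCap (p : Cn 2) : Cn 3 := WithLp.toLp 2 ![p 0, p 1 ^ 2, p 0 * p 1]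

def crossCapSurface : Set (Cn 3) := {v | v 2 ^ 2 = v 0 ^ 2 * v 1}

theorem continuous_crossCap : Continuous crossCap := by
  unfold crossCap
  fun_prop

theorem range_crossCap : range crossCap = crossCapSurface := by
  refine Subset.antisymm ?_ fun v (hv : v 2 ^ 2 = v 0 ^ 2 * v 1) => ?_
  · rintro _ ⟨p, rfl⟩
    show (p 0 * p 1) ^ 2 = p 0 ^ 2 * p 1 ^ 2
    ring
  by_cases h0 : v 0 = 0
  · have h2 : v 2 = 0 := by simpa [h0] using hv
    obtain ⟨s, hs⟩ := IsAlgClosed.exists_pow_nat_eq (v 1) two_pos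
    exact ⟨WithLp.toLp 2 ![0, s], PiLp.toLp_vec3_eq_iff.2
      ⟨h0.symm, hs, by show 0 * s = v 2; rw [zero_mul, h2]⟩⟩
  · refine ⟨WithLp.toLp 2 ![v 0, v 2 / v 0], PiLp.toLp_vec3_eq_iff.2 ⟨rfl, ?_, ?_⟩⟩
    · show (v 2 / v 0) ^ 2 = v 1
      field_simp
      exact hv
    · show v 0 * (v 2 / v 0) = v 2
      field_simp

theorem mem_tangentConeSet_of_tendsto {E ι : Type*} [NormedAddCommGroup E] [NormedSpace ℂ E]
    {l : Filter ι} [l.IsCountablyGenerated] [l.NeBot] {X : Set E} {x v : E}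
    {γ : ι → E} {c : ι → ℂ} (hX : ∀ i, γ i ∈ X) (hγ : Tendsto γ l (𝓝 x))
    (hv : Tendsto (fun i => c i • (γ i - x)) l (𝓝 v)) : v ∈ tangentConeSet X x := by
  obtain ⟨u, hu⟩ := l.exists_seq_tendsto
  exact ⟨γ ∘ u, c ∘ u, fun k => hX _, hγ.comp hu, hv.comp hu⟩

theorem tangentConeSet_crossCapSurface_subset :
    tangentConeSet crossCapSurface 0 ⊆ {v | v 2 = 0} := by
  rintro v ⟨xs, ts, hmem, hxs, hv⟩
  have coord : ∀ i, Tendsto (fun k => ts k * xs k i) atTop (𝓝 (v i)) := fun i => by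
    simpa [Function.comp_def] using ((PiLp.continuous_apply 2 _ i).tendsto v).comp hv
  have hb : Tendsto (fun k => xs k 1) atTop (𝓝 0) := by
    simpa [Function.comp_def] using ((PiLp.continuous_apply 2 _ 1).tendsto 0).comp hxs
  have hc : Tendsto (fun k => (ts k * xs k 2) ^ 2) atTop (𝓝 (v 0 ^ 2 * 0)) :=
    (((coord 0).pow 2).mul hb).congr fun k => by rw [mul_pow, mul_pow, hmem k]; ring
  have hv2 : v 2 ^ 2 = 0 := by simpa using tendsto_nhds_unique ((coord 2).pow 2) hc
  exact pow_eq_zero_iff two_ne_zero |>.1 hv2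

theorem subset_tangentConeSet_crossCapSurface :
    {v | v 2 = 0} ⊆ tangentConeSet crossCapSurface 0 := by
  intro v (hv : v 2 = 0)
  obtain ⟨s, hs⟩ := IsAlgClosed.exists_pow_nat_eq (v 1) two_pos
  let γ : ℂ → Cn 3 := fun z => crossCap (WithLp.toLp 2 ![z ^ 2 * v 0, z * s])
  let δ : ℂ → Cn 3 := fun z => WithLp.toLp 2 ![v 0, s ^ 2, z * (v 0 * s)]
  have hδγ : ∀ z ≠ 0, δ z = (z ^ 2)⁻¹ • γ z := fun z hz => PiLp.toLp_vec3_eq_iff.2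
    ⟨by show v 0 = (z ^ 2)⁻¹ * (z ^ 2 * v 0); field_simp,
      by show s ^ 2 = (z ^ 2)⁻¹ * (z * s) ^ 2; field_simp,
      by show z * (v 0 * s) = (z ^ 2)⁻¹ * (z ^ 2 * v 0 * (z * s)); field_simp⟩
  have hγ : Continuous γ := continuous_crossCap.comp (by fun_prop)
  have hδ : Continuous δ := by fun_prop
  have hγ0 : γ 0 = 0 := by simp [γ, crossCap]
  have hδ0 : δ 0 = v := PiLp.toLp_vec3_eq_iff.2 ⟨rfl, hs, by rw [zero_mul, hv]⟩
  refine mem_tangentConeSet_of_tendsto (l := 𝓝[≠] 0) (γ := γ) (c := fun z => (z ^ 2)⁻¹)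
    (fun z => range_crossCap ▸ mem_range_self _) ?_ ?_
  · exact (hγ.tendsto' 0 0 hγ0).mono_left nhdsWithin_le_nhds
  · simp_rw [sub_zero]
    exact ((hδ.tendsto' 0 v hδ0).mono_left nhdsWithin_le_nhds).congr'
      (eventually_nhdsWithin_of_forall hδγ)

/-- **Example (statement 9).** For `f(x,y) = (x, y², xy)` the image is
`{(a,b,c) : c² = a²b}` and the tangent cone of this set at the origin is `{c = 0}`. -/
theorem image_and_tangent_cone_of_cross_cap :
    Set.range (fun p : Cn 2 => (WithLp.toLp 2 ![p 0, (p 1) ^ 2, p 0 * p 1] : Cn 3)) =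
      {v : Cn 3 | (v 2) ^ 2 = (v 0) ^ 2 * v 1} ∧
    tangentConeSet {v : Cn 3 | (v 2) ^ 2 = (v 0) ^ 2 * v 1} 0 =
      {v : Cn 3 | v 2 = 0} :=
  ⟨range_crossCap, Subset.antisymm tangentConeSet_crossCapSurface_subset
    subset_tangentConeSet_crossCapSurface⟩
end
end
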